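/- Let φ(τ) be positive and continuous with φ(0) = 1, and define ψ(τ) = ∫₀^τ φ(s) ds. Suppose φ = e^{−8θ ∫₀^τ z₂(s)³ ds} where z₂(τ) = pσ² φ(τ) F(σ² ψ(τ)) and F(a) = ∫₀^∞ e^{4au²−u} u du. Then for m ≥ 2, the function z_m(τ) = (pσ^m φ(τ)^{m/2} / (m−2)!!) ∫₀^∞ e^{4σ²ψ(τ)u² − u} u^{m−1} du satisfies the ODE ż_m = 4m (z_{m+2} − θ z₂³ z_m) for all even m ≥ 2 (with (0)!! = 1), on any interval where ψ(τ) ≤ 0. -/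

import Mathlib

/-!
For `a < 0` the integrand `e^{4au² − u} u^k` and its `a`-derivative are dominated by multiples
of `e^{−u} u^{k+2}`, so one may differentiate under the integral sign:
`d/da ∫₀^∞ e^{4au² − u} u^k du = 4 ∫₀^∞ e^{4au² − u} u^{k+2} du`.
Since `ψ' = φ > 0` and `ψ(0) = 0`, the bound `ψ ≤ 0` on the open set `s` forces `ψ < 0` on `s`.
The fundamental theorem of calculus turns the defining equation of `φ` into `φ' = −8θ z₂³ φ`,
and the product and chain rules together with `m‼ = m (m − 2)‼` give the equation.
-/

open MeasureTheory

/-- `F(a) = ∫₀^∞ e^{4au² − u} u du`. -/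
noncomputable def Fint (a : ℝ) : ℝ :=
  ∫ u in Set.Ioi (0 : ℝ), Real.exp (4 * a * u ^ 2 - u) * u

/-- The characteristic-curve coordinates
`z_m(τ) = (p σ^m φ(τ)^{m/2}/(m−2)!!) ∫₀^∞ e^{4σ²ψ(τ)u² − u} u^{m−1} du`. -/
noncomputable def zCoord (p σ : ℝ) (φ ψ : ℝ → ℝ) (m : ℕ) (τ : ℝ) : ℝ :=
  p * σ ^ m * (φ τ) ^ ((m : ℝ) / 2) / (Nat.doubleFactorial (m - 2)) *
    ∫ u in Set.Ioi (0 : ℝ), Real.exp (4 * σ ^ 2 * ψ τ * u ^ 2 - u) * u ^ (m - 1)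

open Set

noncomputable def momentIntegral (k : ℕ) (a : ℝ) : ℝ :=
  ∫ u in Ioi (0 : ℝ), Real.exp (4 * a * u ^ 2 - u) * u ^ k

lemma integrableOn_exp_neg_mul_pow (k : ℕ) :
    IntegrableOn (fun u : ℝ => Real.exp (-u) * u ^ k) (Ioi 0) :=
  (Real.GammaIntegral_convergent (s := k + 1) (by positivity)).congr_fun
    (fun u _ => by simp [Real.rpow_natCast]) measurableSet_Ioi

lemma norm_exp_mul_pow_le {a u : ℝ} (k : ℕ) (ha : a ≤ 0) (hu : 0 ≤ u) :
    ‖Real.exp (4 * a * u ^ 2 - u) * u ^ k‖ ≤ Real.exp (-u) * u ^ k := by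
  rw [Real.norm_of_nonneg (by positivity)]
  gcongr
  nlinarith [sq_nonneg u]

lemma ae_norm_exp_mul_pow_le {a : ℝ} (k : ℕ) (ha : a ≤ 0) :
    ∀ᵐ u ∂(volume.restrict (Ioi (0 : ℝ))),
      ‖Real.exp (4 * a * u ^ 2 - u) * u ^ k‖ ≤ Real.exp (-u) * u ^ k := by
  filter_upwards [ae_restrict_mem measurableSet_Ioi] with u hu
  exact norm_exp_mul_pow_le k ha (le_of_lt hu)

lemma integrableOn_exp_mul_pow {a : ℝ} (k : ℕ) (ha : a ≤ 0) :
    IntegrableOn (fun u : ℝ => Real.exp (4 * a * u ^ 2 - u) * u ^ k) (Ioi 0) :=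
  (integrableOn_exp_neg_mul_pow k).mono' (by fun_prop) (ae_norm_exp_mul_pow_le k ha)

lemma continuousOn_momentIntegral (k : ℕ) : ContinuousOn (momentIntegral k) (Iic 0) :=
  fun _ _ => continuousWithinAt_of_dominated (.of_forall fun _ => by fun_prop)
    (eventually_nhdsWithin_of_forall fun _ ha => ae_norm_exp_mul_pow_le k ha)
    (integrableOn_exp_neg_mul_pow k) (.of_forall fun _ => by fun_prop)

lemma hasDerivAt_momentIntegral {a : ℝ} (k : ℕ) (ha : a < 0) :
    HasDerivAt (momentIntegral k) (4 * momentIntegral (k + 2) a) a := by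
  have hball : Metric.ball a (-a) ⊆ Iio 0 := fun x hx => by
    rw [Metric.mem_ball, Real.dist_eq] at hx
    show x < 0
    linarith [(abs_lt.1 hx).2]
  have key := hasDerivAt_integral_of_dominated_loc_of_deriv_le
    (μ := volume.restrict (Ioi (0 : ℝ)))
    (F := fun x u => Real.exp (4 * x * u ^ 2 - u) * u ^ k)
    (F' := fun x u => 4 * u ^ 2 * (Real.exp (4 * x * u ^ 2 - u) * u ^ k))
    (bound := fun u => 4 * (Real.exp (-u) * u ^ (k + 2)))
    (Metric.ball_mem_nhds a (neg_pos.2 ha)) (.of_forall fun _ => by fun_prop)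
    (integrableOn_exp_mul_pow k ha.le) (by fun_prop) ?_
    ((integrableOn_exp_neg_mul_pow (k + 2)).const_mul 4) ?_
  · have hderiv : ∫ u in Ioi (0 : ℝ), 4 * u ^ 2 * (Real.exp (4 * a * u ^ 2 - u) * u ^ k) =
        4 * momentIntegral (k + 2) a := by
      rw [momentIntegral, ← integral_const_mul]
      congr 1 with u
      ring
    exact hderiv ▸ key.2
  · filter_upwards [ae_restrict_mem measurableSet_Ioi] with u hu x hx
    rw [norm_mul, Real.norm_of_nonneg (by positivity)]
    calc 4 * u ^ 2 * ‖Real.exp (4 * x * u ^ 2 - u) * u ^ k‖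
        ≤ 4 * u ^ 2 * (Real.exp (-u) * u ^ k) := by
          gcongr; exact norm_exp_mul_pow_le k (hball hx).le (le_of_lt hu)
      _ = 4 * (Real.exp (-u) * u ^ (k + 2)) := by ring
  · refine .of_forall fun u x _ => ?_
    have hexp : HasDerivAt (fun y : ℝ => 4 * y * u ^ 2 - u) (4 * u ^ 2) x := by
      simpa using ((hasDerivAt_id x).const_mul 4).mul_const (u ^ 2) |>.sub_const u
    exact (hexp.exp.mul_const (u ^ k)).congr_deriv (by ring)

lemma HasDerivAt.rpow_const_of_eq_mul {f : ℝ → ℝ} {x L : ℝ} (r : ℝ)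
    (hf : HasDerivAt f (f x * L) x) (hx : 0 < f x) :
    HasDerivAt (fun t => f t ^ r) (r * L * f x ^ r) x := by
  convert hf.rpow_const (p := r) (Or.inl hx.ne') using 1
  rw [Real.rpow_sub_one hx.ne']
  field_simp

lemma StrictMono.lt_of_forall_le_of_isOpen {α β : Type*} [TopologicalSpace α] [LinearOrder α]
    [OrderTopology α] [DenselyOrdered α] [NoMaxOrder α] [Preorder β] {f : α → β}
    (hf : StrictMono f) {s : Set α} (hs : IsOpen s) {c : β} (hc : ∀ x ∈ s, f x ≤ c) {x : α}
    (hx : x ∈ s) : f x < c := by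
  obtain ⟨y, hxy, hy⟩ := ((frequently_gt_nhds x).and_eventually (hs.mem_nhds hx)).exists
  exact (hf hxy).trans_le (hc y hy)

lemma hasDerivAt_intervalIntegral_of_continuousOn_Iic {E : Type*} [NormedAddCommGroup E]
    [NormedSpace ℝ E] [CompleteSpace E] {g : ℝ → E} {a b c : ℝ} (hg : ContinuousOn g (Iic c))
    (ha : a ≤ c) (hb : b < c) : HasDerivAt (fun t => ∫ x in a..t, g x) (g b) b :=
  intervalIntegral.integral_hasDerivAt_right
    (hg.mono fun _ hx => hx.2.trans (sup_le ha hb.le)).intervalIntegrable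
    ((hg.mono Iio_subset_Iic_self).stronglyMeasurableAtFilter isOpen_Iio b hb)
    (hg.continuousAt (Iic_mem_nhds hb))

lemma Fint_eq_momentIntegral : Fint = momentIntegral 1 := by
  ext a
  simp [Fint, momentIntegral]

section zCoord

variable (p σ : ℝ) (φ ψ : ℝ → ℝ)

lemma zCoord_two (τ : ℝ) :
    zCoord p σ φ ψ 2 τ = p * σ ^ 2 * φ τ * Fint (σ ^ 2 * ψ τ) := by
  simp [zCoord, Fint, mul_assoc]

lemma zCoord_add_two (n : ℕ) (τ : ℝ) :
    zCoord p σ φ ψ (n + 2) τ = p * σ ^ (n + 2) / Nat.doubleFactorial n *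
      (φ τ ^ (((n + 2 : ℕ) : ℝ) / 2) * momentIntegral (n + 1) (σ ^ 2 * ψ τ)) := by
  rw [zCoord, momentIntegral, Nat.add_sub_cancel, show n + 2 - 1 = n + 1 from rfl,
    ← mul_assoc 4]
  ring

variable {p σ φ ψ}

lemma hasDerivAt_zCoord_add_two {τ L : ℝ} (n : ℕ) (hφ : HasDerivAt φ (φ τ * L) τ)
    (hψ : HasDerivAt ψ (φ τ) τ) (hφτ : 0 < φ τ) (ha : σ ^ 2 * ψ τ < 0) :
    HasDerivAt (zCoord p σ φ ψ (n + 2))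
      (((n : ℝ) + 2) / 2 * L * zCoord p σ φ ψ (n + 2) τ +
        4 * ((n : ℝ) + 2) * zCoord p σ φ ψ (n + 2 + 2) τ) τ := by
  have hM : HasDerivAt (momentIntegral (n + 1) ∘ fun t => σ ^ 2 * ψ t)
      (4 * momentIntegral (n + 3) (σ ^ 2 * ψ τ) * (σ ^ 2 * φ τ)) τ :=
    (hasDerivAt_momentIntegral (n + 1) ha).comp τ (hψ.const_mul (σ ^ 2))
  have hz := ((hφ.rpow_const_of_eq_mul (((n + 2 : ℕ) : ℝ) / 2) hφτ).mul hM).const_mul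
    (p * σ ^ (n + 2) / Nat.doubleFactorial n)
  refine (hz.congr_of_eventuallyEq (.of_forall (zCoord_add_two p σ φ ψ n))).congr_deriv ?_
  have hexp : ((n + 2 + 2 : ℕ) : ℝ) / 2 = ((n + 2 : ℕ) : ℝ) / 2 + 1 := by push_cast; ring
  rw [zCoord_add_two, zCoord_add_two, hexp, Real.rpow_add_one hφτ.ne',
    Nat.doubleFactorial_add_two, Function.comp_apply]
  push_cast
  field_simp
  ring

end zCoord

theorem zCoord_ODE_general (θ p σ : ℝ) (hσ : 0 < σ)
    (φ ψ : ℝ → ℝ)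
    (hφcont : Continuous φ) (hφpos : ∀ τ, 0 < φ τ)
    (hψ : ∀ τ, ψ τ = ∫ s in (0 : ℝ)..τ, φ s)
    (hφeq : ∀ τ, φ τ =
      Real.exp (-8 * θ * ∫ s in (0 : ℝ)..τ, (p * σ ^ 2 * φ s * Fint (σ ^ 2 * ψ s)) ^ 3))
    (s : Set ℝ) (hs : IsOpen s) (hψneg : ∀ τ ∈ s, ψ τ ≤ 0) :
    ∀ m : ℕ, 2 ≤ m → Even m → ∀ τ ∈ s,
      HasDerivAt (zCoord p σ φ ψ m)
        (4 * m * (zCoord p σ φ ψ (m + 2) τ -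
          θ * (zCoord p σ φ ψ 2 τ) ^ 3 * zCoord p σ φ ψ m τ)) τ := by
  intro m hm _ τ hτ
  obtain ⟨n, rfl⟩ : ∃ n, m = n + 2 := ⟨m - 2, by omega⟩
  have hψ' : ∀ t, HasDerivAt ψ (φ t) t := fun t =>
    funext hψ ▸ (hφcont.integral_hasStrictDerivAt 0 t).hasDerivAt
  have hψmono : StrictMono ψ := strictMono_of_hasDerivAt_pos hψ' hφpos
  have hψcont : Continuous ψ := continuous_iff_continuousAt.2 fun t => (hψ' t).continuousAt
  have hψ0 : ψ 0 = 0 := by simp [hψ]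
  have hψτ : ψ τ < 0 := hψmono.lt_of_forall_le_of_isOpen hs hψneg hτ
  have hτ0 : τ < 0 := hψmono.lt_iff_lt.1 (by rwa [hψ0])
  have hσψ : MapsTo (fun t => σ ^ 2 * ψ t) (Iic 0) (Iic 0) := fun t ht =>
    mul_nonpos_of_nonneg_of_nonpos (sq_nonneg σ) (hψ0 ▸ hψmono.monotone ht)
  have hz₂ : ContinuousOn (fun t => zCoord p σ φ ψ 2 t ^ 3) (Iic 0) := by
    simp only [zCoord_two, Fint_eq_momentIntegral]
    exact ((continuousOn_const.mul hφcont.continuousOn).mul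
      ((continuousOn_momentIntegral 1).comp (by fun_prop) hσψ)).pow 3
  have hφ' : HasDerivAt φ (φ τ * (-8 * θ * zCoord p σ φ ψ 2 τ ^ 3)) τ := by
    simp_rw [← zCoord_two] at hφeq
    rw [hφeq τ]
    exact (((hasDerivAt_intervalIntegral_of_continuousOn_Iic hz₂ le_rfl hτ0).const_mul
      (-8 * θ)).exp).congr_of_eventuallyEq (.of_forall hφeq)
  convert hasDerivAt_zCoord_add_two n hφ' (hψ' τ) (hφpos τ)
    (mul_neg_of_pos_of_neg (by positivity) hψτ) using 1
  push_cast
  ring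

/-- with `φ > 0` continuous, `φ(0)=1`, `ψ = ∫₀^τ φ`,
`φ = exp(−8θ∫₀^τ z₂³)` where `z₂ = pσ²φ F(σ²ψ)`, the functions `z_m` satisfy
`ż_m = 4m(z_{m+2} − θ z₂³ z_m)` for all even `m ≥ 2`, on any interval where
`ψ ≤ 0`. -/
theorem zCoord_ODE (θ p σ : ℝ) (hθ : 0 < θ) (hp : 0 < p) (hσ : 0 < σ)
    (φ ψ : ℝ → ℝ)
    (hφcont : Continuous φ) (hφpos : ∀ τ, 0 < φ τ) (hφ0 : φ 0 = 1)
    (hψ : ∀ τ, ψ τ = ∫ s in (0 : ℝ)..τ, φ s)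
    (hφeq : ∀ τ, φ τ =
      Real.exp (-8 * θ * ∫ s in (0 : ℝ)..τ, (p * σ ^ 2 * φ s * Fint (σ ^ 2 * ψ s)) ^ 3))
    (s : Set ℝ) (hs : IsOpen s) (hψneg : ∀ τ ∈ s, ψ τ ≤ 0) :
    ∀ m : ℕ, 2 ≤ m → Even m → ∀ τ ∈ s,
      HasDerivAt (zCoord p σ φ ψ m)
        (4 * m * (zCoord p σ φ ψ (m + 2) τ -
          θ * (zCoord p σ φ ψ 2 τ) ^ 3 * zCoord p σ φ ψ m τ)) τ :=
  zCoord_ODE_general θ p σ hσ φ ψ hφcont hφpos hψ hφeq s hs hψneg
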